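/- Araki–Lieb inequality: for a bipartite quantum state ρ_{AB} on a finite-dimensional Hilbert space, S(AB) ≥ |S(A) − S(B)|, where S denotes von Neumann entropy and S(A), S(B) are entropies of the reduced states. -/

import Mathlib

open scoped Classical ComplexOrder

noncomputable section

/-- Partial trace over the second factor: the reduced state on system `A`. -/
def traceRight {A B : Type*} [Fintype A] [Fintype B]
    (ρ : Matrix (A × B) (A × B) ℂ) : Matrix A A ℂ :=
  fun a a' => ∑ b, ρ (a, b) (a', b)

/-- Partial trace over the first factor: the reduced state on system `B`. -/
def traceLeft {A B : Type*} [Fintype A] [Fintype B]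
    (ρ : Matrix (A × B) (A × B) ℂ) : Matrix B B ℂ :=
  fun b b' => ∑ a, ρ (a, b) (a, b')

/-- Von Neumann entropy `S(ρ) = −∑ λᵢ log λᵢ` in terms of the eigenvalues of a
Hermitian matrix (junk value `0` for non-Hermitian matrices). -/
def vnEntropy {ι : Type*} [Fintype ι] [DecidableEq ι] (ρ : Matrix ι ι ℂ) : ℝ :=
  if h : ρ.IsHermitian then -∑ i, h.eigenvalues i * Real.log (h.eigenvalues i) else 0

end

/-!
Subadditivity `S(AB) ≤ S(A) + S(B)` is Klein's inequality against `ρ_A ⊗ ρ_B`: in the product of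
the eigenbases of the marginals, the diagonal of `ρ` is a doubly stochastic mixture of its
spectrum, and the marginals of that diagonal are the spectra of `ρ_A` and `ρ_B`, so the bound
`p log r ≤ p log p + r - p` does the rest.

For Araki–Lieb, purify `ρ` to a pure state on `(A × B) × C`. The two halves of a bipartite pure
state `ψ` are `M Mᴴ` and `(Mᴴ M)ᵀ` for the coefficient matrix `M` of `ψ`, so they have the same
nonzero spectrum. Hence `S(A) = S(BC) ≤ S(B) + S(C) = S(B) + S(AB)`, and swapping `A` and `B`
gives the other half of the absolute value.
-/

open Polynomial Matrix
open scoped Kronecker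

section Spectrum

variable {ι κ : Type*} [Fintype ι] [DecidableEq ι] [Fintype κ] [DecidableEq κ]

theorem Matrix.IsHermitian.vnEntropy_eq {M : Matrix ι ι ℂ} (hM : M.IsHermitian) :
    vnEntropy M = -∑ i, hM.eigenvalues i * Real.log (hM.eigenvalues i) := by
  rw [vnEntropy, dif_pos hM]

theorem Matrix.IsHermitian.re_trace_eq_sum_eigenvalues {M : Matrix ι ι ℂ} (hM : M.IsHermitian) :
    M.trace.re = ∑ i, hM.eigenvalues i := by
  rw [hM.trace_eq_sum_eigenvalues, Complex.re_sum]
  rfl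

theorem Matrix.IsHermitian.conjTranspose_eigenvectorUnitary_mul_mul {M : Matrix ι ι ℂ}
    (hM : M.IsHermitian) :
    (hM.eigenvectorUnitary : Matrix ι ι ℂ)ᴴ * M * (hM.eigenvectorUnitary : Matrix ι ι ℂ) =
      diagonal (RCLike.ofReal ∘ hM.eigenvalues) := by
  simpa [star_eq_conjTranspose] using hM.conjStarAlgAut_star_eigenvectorUnitary

theorem vnEntropy_eq_neg_sum_roots_charpoly {M : Matrix ι ι ℂ} (hM : M.IsHermitian) :
    vnEntropy M = -(M.charpoly.roots.map fun z => z.re * Real.log z.re).sum := by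
  simp [vnEntropy, hM, hM.roots_charpoly_eq_eigenvalues, Multiset.map_map]

/-- Zero eigenvalues do not contribute to the entropy, since `0 * log 0 = 0`. -/
theorem vnEntropy_eq_of_X_pow_mul_charpoly_eq {M : Matrix ι ι ℂ} {N : Matrix κ κ ℂ}
    (hM : M.IsHermitian) (hN : N.IsHermitian) {m n : ℕ}
    (h : X ^ m * M.charpoly = X ^ n * N.charpoly) : vnEntropy M = vnEntropy N := by
  have hroots := congrArg roots h
  rw [roots_mul (mul_ne_zero (pow_ne_zero _ X_ne_zero) M.charpoly_monic.ne_zero),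
    roots_mul (mul_ne_zero (pow_ne_zero _ X_ne_zero) N.charpoly_monic.ne_zero),
    roots_X_pow, roots_X_pow] at hroots
  have := congrArg (fun s : Multiset ℂ => (s.map fun z => z.re * Real.log z.re).sum) hroots
  simp only [Multiset.map_add, Multiset.sum_add, Multiset.map_nsmul, Multiset.sum_nsmul,
    Multiset.map_singleton, Multiset.sum_singleton, Complex.zero_re, zero_mul, smul_zero,
    zero_add] at this
  rw [vnEntropy_eq_neg_sum_roots_charpoly hM, vnEntropy_eq_neg_sum_roots_charpoly hN, this]

theorem vnEntropy_reindex (e : ι ≃ κ) {M : Matrix ι ι ℂ} (hM : M.IsHermitian) :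
    vnEntropy (reindex e e M) = vnEntropy M :=
  vnEntropy_eq_of_X_pow_mul_charpoly_eq (m := 0) (n := 0)
    (hM.submatrix e.symm) hM (by rw [charpoly_reindex])

theorem vnEntropy_transpose {M : Matrix ι ι ℂ} (hM : M.IsHermitian) :
    vnEntropy Mᵀ = vnEntropy M :=
  vnEntropy_eq_of_X_pow_mul_charpoly_eq (m := 0) (n := 0)
    hM.transpose hM (by rw [charpoly_transpose])

theorem vnEntropy_mul_conjTranspose_self (M : Matrix ι κ ℂ) :
    vnEntropy (M * Mᴴ) = vnEntropy (Mᴴ * M) :=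
  vnEntropy_eq_of_X_pow_mul_charpoly_eq (isHermitian_mul_conjTranspose_self M)
    (isHermitian_conjTranspose_mul_self M) (charpoly_mul_comm' M Mᴴ)

end Spectrum

section PartialTrace

variable {A B C : Type*} [Fintype A] [Fintype B] [Fintype C]

theorem trace_traceRight (ρ : Matrix (A × B) (A × B) ℂ) : (traceRight ρ).trace = ρ.trace := by
  simp [trace, traceRight, Fintype.sum_prod_type]

theorem trace_traceLeft (ρ : Matrix (A × B) (A × B) ℂ) : (traceLeft ρ).trace = ρ.trace := by
  simp [trace, traceLeft, Fintype.sum_prod_type]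
  exact Finset.sum_comm

theorem traceRight_eq_sum_submatrix (ρ : Matrix (A × B) (A × B) ℂ) :
    traceRight ρ = ∑ b, ρ.submatrix (·, b) (·, b) := by
  ext a a'
  simp [traceRight, Matrix.sum_apply]

theorem traceRight_reindex_prodComm (ρ : Matrix (A × B) (A × B) ℂ) :
    traceRight (reindex (Equiv.prodComm A B) (Equiv.prodComm A B) ρ) = traceLeft ρ := rfl

theorem traceLeft_reindex_prodComm (ρ : Matrix (A × B) (A × B) ℂ) :
    traceLeft (reindex (Equiv.prodComm A B) (Equiv.prodComm A B) ρ) = traceRight ρ := rfl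

theorem Matrix.PosSemidef.traceRight {ρ : Matrix (A × B) (A × B) ℂ} (hρ : ρ.PosSemidef) :
    (traceRight ρ).PosSemidef := by
  rw [traceRight_eq_sum_submatrix]
  exact posSemidef_sum _ fun b _ => hρ.submatrix _

theorem Matrix.PosSemidef.traceLeft {ρ : Matrix (A × B) (A × B) ℂ} (hρ : ρ.PosSemidef) :
    (traceLeft ρ).PosSemidef := by
  rw [← traceRight_reindex_prodComm]
  exact (hρ.submatrix _).traceRight

section Associativity

variable (ρ : Matrix ((A × B) × C) ((A × B) × C) ℂ)

theorem traceRight_reindex_prodAssoc :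
    traceRight (reindex (Equiv.prodAssoc A B C) (Equiv.prodAssoc A B C) ρ) =
      traceRight (traceRight ρ) := by
  ext a a'
  simp [traceRight, Fintype.sum_prod_type]

theorem traceRight_traceLeft_reindex_prodAssoc :
    traceRight (traceLeft (reindex (Equiv.prodAssoc A B C) (Equiv.prodAssoc A B C) ρ)) =
      traceLeft (traceRight ρ) := by
  ext b b'
  simp [traceRight, traceLeft]
  exact Finset.sum_comm

theorem traceLeft_traceLeft_reindex_prodAssoc :
    traceLeft (traceLeft (reindex (Equiv.prodAssoc A B C) (Equiv.prodAssoc A B C) ρ)) =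
      traceLeft ρ := by
  ext c c'
  simp [traceLeft, Fintype.sum_prod_type]
  exact Finset.sum_comm

end Associativity

theorem traceRight_kronecker_one_mul [DecidableEq B] (X : Matrix A A ℂ)
    (M : Matrix (A × B) (A × B) ℂ) :
    traceRight ((X ⊗ₖ (1 : Matrix B B ℂ)) * M) = X * traceRight M := by
  ext a a'
  simp [traceRight, mul_apply, Fintype.sum_prod_type, one_apply, Finset.mul_sum]
  exact Finset.sum_comm

theorem traceRight_mul_kronecker_one [DecidableEq B] (X : Matrix A A ℂ)
    (M : Matrix (A × B) (A × B) ℂ) :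
    traceRight (M * (X ⊗ₖ (1 : Matrix B B ℂ))) = traceRight M * X := by
  ext a a'
  simp [traceRight, mul_apply, Fintype.sum_prod_type, one_apply, Finset.sum_mul]
  exact Finset.sum_comm

theorem traceRight_one_kronecker_mul_comm [DecidableEq A] (Y : Matrix B B ℂ)
    (M : Matrix (A × B) (A × B) ℂ) :
    traceRight (((1 : Matrix A A ℂ) ⊗ₖ Y) * M) = traceRight (M * ((1 : Matrix A A ℂ) ⊗ₖ Y)) := by
  ext a a'
  simp [traceRight, mul_apply, Fintype.sum_prod_type, one_apply]
  rw [Finset.sum_comm]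
  simp_rw [mul_comm]

theorem traceRight_conjTranspose_kronecker_mul_mul [DecidableEq A] [DecidableEq B]
    (X : Matrix A A ℂ) {Y : Matrix B B ℂ} (hY : Y * Yᴴ = 1) (ρ : Matrix (A × B) (A × B) ℂ) :
    traceRight ((X ⊗ₖ Y)ᴴ * ρ * (X ⊗ₖ Y)) = Xᴴ * traceRight ρ * X := by
  have hsplit : ∀ (X : Matrix A A ℂ) (Y : Matrix B B ℂ), X ⊗ₖ Y = (X ⊗ₖ 1) * (1 ⊗ₖ Y) :=
    fun X Y => by rw [← mul_kronecker_mul, mul_one, one_mul]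
  rw [conjTranspose_kronecker, hsplit Xᴴ, hsplit X]
  simp only [mul_assoc]
  rw [traceRight_kronecker_one_mul, traceRight_one_kronecker_mul_comm]
  simp only [mul_assoc]
  rw [← mul_kronecker_mul, mul_one, hY, one_kronecker_one, mul_one, traceRight_mul_kronecker_one]

theorem traceLeft_conjTranspose_kronecker_mul_mul [DecidableEq A] [DecidableEq B]
    {X : Matrix A A ℂ} (hX : X * Xᴴ = 1) (Y : Matrix B B ℂ) (ρ : Matrix (A × B) (A × B) ℂ) :
    traceLeft ((X ⊗ₖ Y)ᴴ * ρ * (X ⊗ₖ Y)) = Yᴴ * traceLeft ρ * Y := by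
  have hswap : reindex (Equiv.prodComm A B) (Equiv.prodComm A B) (X ⊗ₖ Y) = Y ⊗ₖ X := by
    ext x y
    simp [mul_comm]
  rw [← traceRight_reindex_prodComm, ← traceRight_reindex_prodComm,
    ← traceRight_conjTranspose_kronecker_mul_mul Y hX]
  simp only [← coe_reindexAlgEquiv ℂ ℂ, map_mul]
  simp only [coe_reindexAlgEquiv, ← conjTranspose_reindex, hswap]

theorem traceRight_vecMulVec_star (ψ : A × B → ℂ) :
    traceRight (vecMulVec ψ (star ψ)) = of (Function.curry ψ) * (of (Function.curry ψ))ᴴ := by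
  ext a a'
  simp [traceRight, vecMulVec_apply, mul_apply]

theorem traceLeft_vecMulVec_star (ψ : A × B → ℂ) :
    traceLeft (vecMulVec ψ (star ψ)) = ((of (Function.curry ψ))ᴴ * of (Function.curry ψ))ᵀ := by
  ext b b'
  simp [traceLeft, vecMulVec_apply, mul_apply, mul_comm]

end PartialTrace

section Gibbs

theorem Real.mul_log_le_mul_log_add_sub {p r : ℝ} (hp : 0 ≤ p) (hr : 0 < r) :
    p * Real.log r ≤ p * Real.log p + r - p := by
  rcases hp.eq_or_lt with rfl | hp
  · simpa using hr.le
  have h := mul_le_mul_of_nonneg_left (Real.log_le_sub_one_of_pos (div_pos hr hp)) hp.le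
  rw [Real.log_div hr.ne' hp.ne', mul_sub, mul_sub, mul_div_cancel₀ _ hp.ne', mul_one] at h
  linarith

variable {ι : Type*} [Fintype ι] [DecidableEq ι]

theorem sum_mulVec_mul_log_le {P : Matrix ι ι ℝ} (hP : P ∈ doublyStochastic ℝ ι)
    {p r : ι → ℝ} (hp : 0 ≤ p) (hr : 0 ≤ r) (hsum : ∑ l, r l ≤ ∑ k, p k)
    (hsupp : ∀ l, r l = 0 → (P *ᵥ p) l = 0) :
    ∑ l, (P *ᵥ p) l * Real.log (r l) ≤ ∑ k, p k * Real.log (p k) := by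
  have hPp : ∀ l k, 0 ≤ P l k * p k := fun l k =>
    mul_nonneg (nonneg_of_mem_doublyStochastic hP) (hp k)
  have term : ∀ l k, P l k * p k * Real.log (r l) ≤
      P l k * (p k * Real.log (p k)) + P l k * r l - P l k * p k := by
    intro l k
    rcases (hr l).eq_or_lt with hrl | hrl
    · have hzero : P l k * p k = 0 :=
        (Finset.sum_eq_zero_iff_of_nonneg fun k _ => hPp l k).mp
          (hsupp l hrl.symm) k (Finset.mem_univ k)
      rw [← hrl, ← mul_assoc, hzero]
      simp
    · have := mul_le_mul_of_nonneg_left (Real.mul_log_le_mul_log_add_sub (hp k) hrl)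
        (nonneg_of_mem_doublyStochastic hP (i := l) (j := k))
      linarith
  calc ∑ l, (P *ᵥ p) l * Real.log (r l)
      = ∑ l, ∑ k, P l k * p k * Real.log (r l) := by
        simp only [mulVec, dotProduct, Finset.sum_mul]
    _ ≤ ∑ l, ∑ k, (P l k * (p k * Real.log (p k)) + P l k * r l - P l k * p k) :=
        Finset.sum_le_sum fun l _ => Finset.sum_le_sum fun k _ => term l k
    _ = ∑ k, p k * Real.log (p k) + ∑ l, r l - ∑ k, p k := by
        simp only [Finset.sum_sub_distrib, Finset.sum_add_distrib, ← Finset.sum_mul,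
          sum_row_of_mem_doublyStochastic hP, one_mul]
        rw [Finset.sum_comm (f := fun l k => P l k * (p k * Real.log (p k))),
          Finset.sum_comm (f := fun l k => P l k * p k)]
        simp only [← Finset.sum_mul, sum_col_of_mem_doublyStochastic hP, one_mul]
    _ ≤ ∑ k, p k * Real.log (p k) := by linarith

theorem map_normSq_mem_doublyStochastic {U : Matrix ι ι ℂ} (hU : U ∈ unitaryGroup ι ℂ) :
    U.map Complex.normSq ∈ doublyStochastic ℝ ι := by
  have entry : ∀ M N : Matrix ι ι ℂ, M * N = 1 → ∀ i, ∑ j, M i j * N j i = 1 :=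
    fun M N h i => by rw [← mul_apply, h, one_apply_eq]
  refine mem_doublyStochastic_iff_sum.mpr
    ⟨fun i j => Complex.normSq_nonneg _, fun i => ?_, fun j => ?_⟩
  · have := entry _ _ (mem_unitaryGroup_iff.mp hU) i
    simp only [star_apply, Complex.star_def, Complex.mul_conj] at this
    exact_mod_cast this
  · have := entry _ _ (mem_unitaryGroup_iff'.mp hU) j
    simp only [star_apply, Complex.star_def, mul_comm _ (U _ j), Complex.mul_conj] at this
    exact_mod_cast this

theorem mul_diagonal_mul_conjTranspose_apply_self (V : Matrix ι ι ℂ) (d : ι → ℝ) (l : ι) :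
    (V * diagonal (RCLike.ofReal ∘ d) * Vᴴ : Matrix ι ι ℂ) l l =
      ((V.map Complex.normSq *ᵥ d) l : ℂ) := by
  rw [mul_apply]
  simp only [mul_diagonal, conjTranspose_apply, mulVec, dotProduct, map_apply,
    Complex.ofReal_sum, Complex.ofReal_mul, Complex.normSq_eq_conj_mul_self, Function.comp_apply,
    Complex.star_def, RCLike.ofReal_eq_complex_ofReal]
  exact Finset.sum_congr rfl fun k _ => by ring

/-- Klein's inequality `−tr ρ log ρ ≤ −tr ρ log σ` for `σ` diagonal in the orthonormal basis of
columns of `W`, with eigenvalues `r`. -/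
theorem vnEntropy_le_neg_sum_re_diag_mul_log {ρ : Matrix ι ι ℂ} (hρ : ρ.PosSemidef)
    {W : Matrix ι ι ℂ} (hW : W ∈ unitaryGroup ι ℂ) {r : ι → ℝ} (hr : 0 ≤ r)
    (hsum : ∑ l, r l ≤ ρ.trace.re) (hsupp : ∀ l, r l = 0 → ((Wᴴ * ρ * W) l l).re = 0) :
    vnEntropy ρ ≤ -∑ l, ((Wᴴ * ρ * W) l l).re * Real.log (r l) := by
  set U : Matrix ι ι ℂ := (hρ.1.eigenvectorUnitary : Matrix ι ι ℂ)
  set p := hρ.1.eigenvalues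
  have hV : Wᴴ * U ∈ unitaryGroup ι ℂ :=
    Submonoid.mul_mem _ (Unitary.star_mem hW) hρ.1.eigenvectorUnitary.2
  have hconj : Wᴴ * ρ * W = (Wᴴ * U) * diagonal (RCLike.ofReal ∘ p) * (Wᴴ * U)ᴴ := by
    have hspec : ρ = U * diagonal (RCLike.ofReal ∘ p) * Uᴴ := hρ.1.spectral_theorem
    rw [hspec]
    simp only [conjTranspose_mul, conjTranspose_conjTranspose, mul_assoc]
  have hq : ∀ l, ((Wᴴ * ρ * W) l l).re = ((Wᴴ * U).map Complex.normSq *ᵥ p) l := fun l => by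
    rw [hconj, mul_diagonal_mul_conjTranspose_apply_self, Complex.ofReal_re]
  rw [hρ.1.vnEntropy_eq, neg_le_neg_iff]
  simp_rw [hq]
  exact sum_mulVec_mul_log_le (map_normSq_mem_doublyStochastic hV) hρ.eigenvalues_nonneg hr
    (hρ.1.re_trace_eq_sum_eigenvalues ▸ hsum) fun l hl => hq l ▸ hsupp l hl

end Gibbs

section Marginals

variable {A B : Type*} [Fintype A] [Fintype B] {q : A × B → ℝ} {a : A → ℝ} {b : B → ℝ}

theorem eq_zero_of_marginals_mul_eq_zero (hq : 0 ≤ q) (hqa : ∀ i, ∑ j, q (i, j) = a i)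
    (hqb : ∀ j, ∑ i, q (i, j) = b j) {i : A} {j : B} (h : a i * b j = 0) : q (i, j) = 0 := by
  rcases mul_eq_zero.mp h with ha | hb
  · exact (Finset.sum_eq_zero_iff_of_nonneg fun j _ => hq (i, j)).mp
      ((hqa i).trans ha) j (Finset.mem_univ j)
  · exact (Finset.sum_eq_zero_iff_of_nonneg fun i _ => hq (i, j)).mp
      ((hqb j).trans hb) i (Finset.mem_univ i)

theorem sum_mul_log_mul_eq_of_marginals (hq : 0 ≤ q) (hqa : ∀ i, ∑ j, q (i, j) = a i)
    (hqb : ∀ j, ∑ i, q (i, j) = b j) :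
    ∑ l, q l * Real.log (a l.1 * b l.2) =
      ∑ i, a i * Real.log (a i) + ∑ j, b j * Real.log (b j) := by
  have hsplit : ∀ i j, q (i, j) * Real.log (a i * b j) =
      q (i, j) * Real.log (a i) + q (i, j) * Real.log (b j) := by
    intro i j
    by_cases h : a i * b j = 0
    · simp [eq_zero_of_marginals_mul_eq_zero hq hqa hqb h]
    rw [Real.log_mul (left_ne_zero_of_mul h) (right_ne_zero_of_mul h), mul_add]
  simp only [Fintype.sum_prod_type, hsplit, Finset.sum_add_distrib, ← Finset.sum_mul, hqa]
  rw [Finset.sum_comm]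
  simp only [← Finset.sum_mul, hqb]

end Marginals

section Bipartite

variable {A B : Type*} [Fintype A] [Fintype B] [DecidableEq A] [DecidableEq B]

theorem vnEntropy_le_vnEntropy_traceRight_add_vnEntropy_traceLeft
    {ρ : Matrix (A × B) (A × B) ℂ} (hρ : ρ.PosSemidef) (htr : ρ.trace = 1) :
    vnEntropy ρ ≤ vnEntropy (traceRight ρ) + vnEntropy (traceLeft ρ) := by
  have hA := hρ.traceRight.1
  have hB := hρ.traceLeft.1
  set UA := hA.eigenvectorUnitary
  set UB := hB.eigenvectorUnitary
  set a := hA.eigenvalues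
  set b := hB.eigenvalues
  set W : Matrix (A × B) (A × B) ℂ := (UA : Matrix A A ℂ) ⊗ₖ (UB : Matrix B B ℂ)
  set q : A × B → ℝ := fun l => ((Wᴴ * ρ * W) l l).re
  have hq : 0 ≤ q := fun l =>
    (Complex.nonneg_iff.mp (hρ.conjTranspose_mul_mul_same W).diag_nonneg).1
  have hqa : ∀ i, ∑ j, q (i, j) = a i := fun i => by
    rw [← Complex.re_sum]
    change (traceRight (Wᴴ * ρ * W) i i).re = a i
    rw [traceRight_conjTranspose_kronecker_mul_mul _ (mem_unitaryGroup_iff.mp UB.2),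
      hA.conjTranspose_eigenvectorUnitary_mul_mul]
    simp [a]
  have hqb : ∀ j, ∑ i, q (i, j) = b j := fun j => by
    rw [← Complex.re_sum]
    change (traceLeft (Wᴴ * ρ * W) j j).re = b j
    rw [traceLeft_conjTranspose_kronecker_mul_mul (mem_unitaryGroup_iff.mp UA.2),
      hB.conjTranspose_eigenvectorUnitary_mul_mul]
    simp [b]
  have hsum : ∑ l : A × B, a l.1 * b l.2 ≤ ρ.trace.re := by
    rw [Fintype.sum_prod_type, ← Finset.sum_mul_sum, ← hA.re_trace_eq_sum_eigenvalues,
      ← hB.re_trace_eq_sum_eigenvalues, trace_traceRight, trace_traceLeft, htr]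
    simp
  have hsupp : ∀ l : A × B, a l.1 * b l.2 = 0 → q l = 0 := fun _ =>
    eq_zero_of_marginals_mul_eq_zero hq hqa hqb
  have hr : 0 ≤ fun l : A × B => a l.1 * b l.2 := fun l =>
    mul_nonneg (hρ.traceRight.eigenvalues_nonneg _) (hρ.traceLeft.eigenvalues_nonneg _)
  calc vnEntropy ρ ≤ -∑ l, q l * Real.log (a l.1 * b l.2) :=
        vnEntropy_le_neg_sum_re_diag_mul_log hρ (kronecker_mem_unitary UA.2 UB.2) hr hsum hsupp
    _ = vnEntropy (traceRight ρ) + vnEntropy (traceLeft ρ) := by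
        rw [sum_mul_log_mul_eq_of_marginals hq hqa hqb, hA.vnEntropy_eq, hB.vnEntropy_eq]
        ring

theorem vnEntropy_traceRight_vecMulVec_star (ψ : A × B → ℂ) :
    vnEntropy (traceRight (vecMulVec ψ (star ψ))) =
      vnEntropy (traceLeft (vecMulVec ψ (star ψ))) := by
  rw [traceRight_vecMulVec_star, traceLeft_vecMulVec_star,
    vnEntropy_transpose (isHermitian_conjTranspose_mul_self _), vnEntropy_mul_conjTranspose_self]

open scoped MatrixOrder in
theorem exists_traceRight_vecMulVec_star_eq {ρ : Matrix A A ℂ} (hρ : ρ.PosSemidef) :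
    ∃ ψ : A × A → ℂ, traceRight (vecMulVec ψ (star ψ)) = ρ := by
  obtain ⟨M, rfl⟩ := CStarAlgebra.nonneg_iff_eq_mul_star_self.mp hρ.nonneg
  exact ⟨Function.uncurry M, traceRight_vecMulVec_star _⟩

theorem vnEntropy_traceRight_le {ρ : Matrix (A × B) (A × B) ℂ} (hρ : ρ.PosSemidef)
    (htr : ρ.trace = 1) : vnEntropy (traceRight ρ) ≤ vnEntropy (traceLeft ρ) + vnEntropy ρ := by
  obtain ⟨ψ, hψ⟩ := exists_traceRight_vecMulVec_star_eq hρ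
  set e := Equiv.prodAssoc A B (A × B)
  set φ := ψ ∘ e.symm
  have hφ : vecMulVec φ (star φ) = reindex e e (vecMulVec ψ (star ψ)) := rfl
  have hτ : (traceLeft (vecMulVec φ (star φ))).PosSemidef :=
    (posSemidef_vecMulVec_self_star φ).traceLeft
  have hτtr : (traceLeft (vecMulVec φ (star φ))).trace = 1 := by
    rw [← trace_traceRight, hφ, traceRight_traceLeft_reindex_prodAssoc, trace_traceLeft, hψ, htr]
  calc vnEntropy (traceRight ρ) = vnEntropy (traceRight (vecMulVec φ (star φ))) := by
        rw [hφ, traceRight_reindex_prodAssoc, hψ]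
    _ = vnEntropy (traceLeft (vecMulVec φ (star φ))) := vnEntropy_traceRight_vecMulVec_star φ
    _ ≤ _ := vnEntropy_le_vnEntropy_traceRight_add_vnEntropy_traceLeft hτ hτtr
    _ = vnEntropy (traceLeft ρ) + vnEntropy ρ := by
        rw [hφ, traceRight_traceLeft_reindex_prodAssoc, traceLeft_traceLeft_reindex_prodAssoc, hψ,
          ← vnEntropy_traceRight_vecMulVec_star, hψ]

end Bipartite

/-- Araki–Lieb inequality `S(AB) ≥ |S(A) − S(B)|`. -/
theorem araki_lieb {A B : Type*}
    [Fintype A] [Fintype B] [DecidableEq A] [DecidableEq B]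
    (ρ : Matrix (A × B) (A × B) ℂ)
    (hpos : ρ.PosSemidef) (htr : ρ.trace = 1) :
    |vnEntropy (traceRight ρ) - vnEntropy (traceLeft ρ)| ≤ vnEntropy ρ := by
  rw [abs_sub_le_iff]
  refine ⟨by linarith [vnEntropy_traceRight_le hpos htr], ?_⟩
  set e := Equiv.prodComm A B
  have hswap_tr : (reindex e e ρ).trace = 1 := by
    rw [← trace_traceRight, traceRight_reindex_prodComm, trace_traceLeft, htr]
  have hswap := vnEntropy_traceRight_le (ρ := reindex e e ρ) (hpos.submatrix e.symm) hswap_tr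
  rw [traceRight_reindex_prodComm, traceLeft_reindex_prodComm, vnEntropy_reindex e hpos.1] at hswap
  linarith
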